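/- arXiv:2101.03510 — 2 statements merged into one kernel-verified Lean document; each statement's English description precedes it below -/
import Mathlib

section
/- Let T : X → Y be a lattice homomorphism between two Archimedean vector lattices X and Y, each admitting a positively homogeneous continuous function calculus (Φ on X and Ψ on Y). Then T(Φ_{(x_1,…,x_m)}(h)) = Ψ_{(Tx_1,…,Tx_m)}(h), i.e. T(h(x_1,…,x_m)) = h(Tx_1,…,Tx_m), for every m ∈ ℕ, h ∈ ℋ_m, and x_1,…,x_m ∈ X. -/
/-- A function `h : ℝ^m → ℝ` belongs to `ℋ_m` iff it is continuous and positively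
homogeneous. -/
def IsPHC {m : ℕ} (h : (Fin m → ℝ) → ℝ) : Prop :=
  Continuous h ∧ ∀ (c : ℝ), 0 ≤ c → ∀ t : Fin m → ℝ, h (c • t) = c * h t

/-!
Both sides, viewed as functions of `h ∈ ℋ_m`, are lattice homomorphisms `ℋ_m → Y` that agree
on the coordinate projections, hence on the vector sublattice they generate. By the lattice
Stone–Weierstrass theorem on the compact set `{t | ∑ |tₖ| = 1}` and positive homogeneity, every
`h ∈ ℋ_m` is a relatively uniform limit of that sublattice: `|h - g| ≤ ε ∑ |tₖ|`. Lattice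
homomorphisms are monotone, so the two sides differ by at most `ε w` for a fixed `w`, and they
coincide because `Y` is Archimedean.
-/

section FunctionCalculus

variable {m : ℕ}

lemma isPHC_zero : IsPHC (0 : (Fin m → ℝ) → ℝ) :=
  ⟨continuous_const, fun c _ t => by simp⟩

lemma isPHC_proj (k : Fin m) : IsPHC fun t : Fin m → ℝ => t k :=
  ⟨continuous_apply k, fun c _ t => by simp⟩

namespace IsPHC

variable {f g : (Fin m → ℝ) → ℝ}

lemma apply_zero (hf : IsPHC f) : f 0 = 0 := by
  simpa using hf.2 0 le_rfl 0

lemma add (hf : IsPHC f) (hg : IsPHC g) : IsPHC (f + g) :=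
  ⟨hf.1.add hg.1, fun c hc t => by simp only [Pi.add_apply, hf.2 c hc t, hg.2 c hc t, mul_add]⟩

lemma sub (hf : IsPHC f) (hg : IsPHC g) : IsPHC (f - g) :=
  ⟨hf.1.sub hg.1, fun c hc t => by simp only [Pi.sub_apply, hf.2 c hc t, hg.2 c hc t, mul_sub]⟩

lemma smul (c : ℝ) (hf : IsPHC f) : IsPHC (c • f) :=
  ⟨hf.1.const_smul c, fun c' hc' t => by
    simp only [Pi.smul_apply, smul_eq_mul, hf.2 c' hc' t, mul_left_comm]⟩

lemma sup (hf : IsPHC f) (hg : IsPHC g) : IsPHC (f ⊔ g) :=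
  ⟨hf.1.max hg.1, fun c hc t => by
    simp only [Pi.sup_apply, hf.2 c hc t, hg.2 c hc t, mul_max_of_nonneg _ _ hc]⟩

end IsPHC

inductive InProjSublattice : ((Fin m → ℝ) → ℝ) → Prop
  | zero : InProjSublattice 0
  | proj (k : Fin m) : InProjSublattice fun t => t k
  | add {f g} : InProjSublattice f → InProjSublattice g → InProjSublattice (f + g)
  | smul (c : ℝ) {f} : InProjSublattice f → InProjSublattice (c • f)
  | sup {f g} : InProjSublattice f → InProjSublattice g → InProjSublattice (f ⊔ g)

namespace InProjSublattice

variable {f g : (Fin m → ℝ) → ℝ}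

lemma isPHC (hf : InProjSublattice f) : IsPHC f := by
  induction hf with
  | zero => exact isPHC_zero
  | proj k => exact isPHC_proj k
  | add _ _ ihf ihg => exact ihf.add ihg
  | smul c _ ih => exact ih.smul c
  | sup _ _ ihf ihg => exact ihf.sup ihg

lemma neg (hf : InProjSublattice f) : InProjSublattice (-f) := by
  simpa using hf.smul (-1)

lemma sub (hf : InProjSublattice f) (hg : InProjSublattice g) : InProjSublattice (f - g) := by
  simpa [sub_eq_add_neg] using hf.add hg.neg

lemma inf (hf : InProjSublattice f) (hg : InProjSublattice g) : InProjSublattice (f ⊓ g) := by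
  simpa [neg_sup] using (hf.neg.sup hg.neg).neg

lemma sum {ι : Type*} (s : Finset ι) {f : ι → (Fin m → ℝ) → ℝ}
    (hf : ∀ i ∈ s, InProjSublattice (f i)) : InProjSublattice (∑ i ∈ s, f i) :=
  Finset.sum_induction f _ (fun _ _ => add) zero hf

end InProjSublattice

def sumAbs (t : Fin m → ℝ) : ℝ := ∑ k, |t k|

lemma sumAbs_nonneg (t : Fin m → ℝ) : 0 ≤ sumAbs t :=
  Finset.sum_nonneg fun k _ => abs_nonneg (t k)

lemma eq_zero_of_sumAbs_eq_zero {t : Fin m → ℝ} (ht : sumAbs t = 0) : t = 0 := by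
  have hk := (Finset.sum_eq_zero_iff_of_nonneg fun k _ => abs_nonneg (t k)).mp ht
  exact funext fun k => abs_eq_zero.mp (hk k (Finset.mem_univ k))

lemma inProjSublattice_sumAbs : InProjSublattice (sumAbs : (Fin m → ℝ) → ℝ) := by
  have hsum : (sumAbs : (Fin m → ℝ) → ℝ) = ∑ k, ((fun t => t k) ⊔ -fun t => t k) := by
    ext t
    simp [sumAbs, Finset.sum_apply, abs_eq_max_neg]
  rw [hsum]
  exact .sum _ fun k _ => (InProjSublattice.proj k).sup (InProjSublattice.proj k).neg

lemma isPHC_sumAbs : IsPHC (sumAbs : (Fin m → ℝ) → ℝ) :=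
  inProjSublattice_sumAbs.isPHC

lemma isCompact_sumAbs_eq_one : IsCompact {t : Fin m → ℝ | sumAbs t = 1} := by
  refine Metric.isCompact_of_isClosed_isBounded (isClosed_eq isPHC_sumAbs.1 continuous_const)
    ((Metric.isBounded_closedBall (x := 0) (r := 1)).subset fun t ht => ?_)
  rw [mem_closedBall_zero_iff, pi_norm_le_iff_of_nonneg zero_le_one]
  intro k
  rw [Real.norm_eq_abs, ← ht.out]
  exact Finset.single_le_sum (fun j _ => abs_nonneg (t j)) (Finset.mem_univ k)

lemma exists_inProjSublattice_eq_one_eq_neg_one {p q : Fin m → ℝ} (hp : sumAbs p = 1)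
    (hq : sumAbs q = 1) (hpq : p ≠ q) :
    ∃ ν, InProjSublattice ν ∧ ν p = 1 ∧ ν q = -1 := by
  obtain ⟨k, hk⟩ := Function.ne_iff.mp hpq
  have hδ : p k - q k ≠ 0 := sub_ne_zero.mpr hk
  -- `t ↦ t k - (p k + q k) / 2 * sumAbs t` takes the values `±(p k - q k) / 2` at `p` and `q`
  refine ⟨(2 / (p k - q k)) • ((fun t => t k) - ((p k + q k) / 2) • sumAbs),
    ((InProjSublattice.proj k).sub (inProjSublattice_sumAbs.smul _)).smul _, ?_, ?_⟩ <;>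
  · simp only [Pi.smul_apply, Pi.sub_apply, smul_eq_mul, hp, hq]
    field_simp
    ring

lemma exists_inProjSublattice_interpolate {p q : Fin m → ℝ} (hp : sumAbs p = 1)
    (hq : sumAbs q = 1) (a b : ℝ) (hab : p = q → a = b) :
    ∃ g, InProjSublattice g ∧ g p = a ∧ g q = b := by
  by_cases hpq : p = q
  · subst hpq
    exact ⟨a • sumAbs, inProjSublattice_sumAbs.smul a, by simp [hp], by simp [hp, hab rfl]⟩
  · obtain ⟨ν, hν, hνp, hνq⟩ := exists_inProjSublattice_eq_one_eq_neg_one hp hq hpq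
    refine ⟨a • (ν ⊔ 0) + b • (-ν ⊔ 0),
      ((hν.sup .zero).smul a).add ((hν.neg.sup .zero).smul b), ?_, ?_⟩ <;>
    simp [hνp, hνq]

lemma exists_inProjSublattice_abs_sub_lt {h : (Fin m → ℝ) → ℝ} (hh : Continuous h) {ε : ℝ}
    (hε : 0 < ε) : ∃ g, InProjSublattice g ∧ ∀ u, sumAbs u = 1 → |h u - g u| < ε := by
  let K := {t : Fin m → ℝ | sumAbs t = 1}
  have : CompactSpace K := isCompact_iff_compactSpace.mp isCompact_sumAbs_eq_one
  let L : Set C(K, ℝ) := {F | ∃ g, InProjSublattice g ∧ ∀ u, F u = g u.1}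
  have hL : closure L = ⊤ := by
    refine ContinuousMap.sublattice_closure_eq_top L ⟨0, 0, .zero, fun _ => rfl⟩ ?_ ?_ ?_
    · rintro F ⟨f, hf, hF⟩ G ⟨g, hg, hG⟩
      exact ⟨f ⊓ g, hf.inf hg, fun u => by simp [hF, hG]⟩
    · rintro F ⟨f, hf, hF⟩ G ⟨g, hg, hG⟩
      exact ⟨f ⊔ g, hf.sup hg, fun u => by simp [hF, hG]⟩
    · intro v p q
      obtain ⟨g, hg, hgp, hgq⟩ := exists_inProjSublattice_interpolate p.2 q.2 (v p) (v q)
        fun hpq => by rw [Subtype.ext hpq]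
      exact ⟨⟨fun u => g u, hg.isPHC.1.comp continuous_subtype_val⟩, ⟨g, hg, fun _ => rfl⟩,
        hgp, hgq⟩
  have hmem : (⟨fun u => h u, hh.comp continuous_subtype_val⟩ : C(K, ℝ)) ∈ closure L := by
    rw [hL]
    trivial
  obtain ⟨F, ⟨g, hg, hFg⟩, hdist⟩ := Metric.mem_closure_iff.mp hmem ε hε
  refine ⟨g, hg, fun u hu => ?_⟩
  have hu := (ContinuousMap.dist_apply_le_dist ⟨u, hu⟩).trans_lt hdist
  rwa [Real.dist_eq, hFg] at hu

lemma IsPHC.abs_le_mul_sumAbs {f : (Fin m → ℝ) → ℝ} (hf : IsPHC f) {ε : ℝ}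
    (hε : ∀ u, sumAbs u = 1 → |f u| ≤ ε) (t : Fin m → ℝ) : |f t| ≤ ε * sumAbs t := by
  rcases (sumAbs_nonneg t).eq_or_lt with h0 | hpos
  · simp [eq_zero_of_sumAbs_eq_zero h0.symm, hf.apply_zero, sumAbs]
  · have hu : sumAbs ((sumAbs t)⁻¹ • t) = 1 := by
      rw [isPHC_sumAbs.2 _ (inv_nonneg.mpr hpos.le), inv_mul_cancel₀ hpos.ne']
    calc |f t| = |f (sumAbs t • (sumAbs t)⁻¹ • t)| := by rw [smul_inv_smul₀ hpos.ne']
      _ = sumAbs t * |f ((sumAbs t)⁻¹ • t)| := by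
        rw [hf.2 _ hpos.le, abs_mul, abs_of_pos hpos]
      _ ≤ sumAbs t * ε := by gcongr; exact hε _ hu
      _ = ε * sumAbs t := mul_comm _ _

lemma exists_inProjSublattice_abs_sub_le {h : (Fin m → ℝ) → ℝ} (hh : IsPHC h) {ε : ℝ}
    (hε : 0 < ε) : ∃ g, InProjSublattice g ∧ |h - g| ≤ ε • sumAbs := by
  obtain ⟨g, hg, hhg⟩ := exists_inProjSublattice_abs_sub_lt hh.1 hε
  exact ⟨g, hg, fun t =>
    (hh.sub hg.isPHC).abs_le_mul_sumAbs (fun u hu => (hhg u hu).le) t⟩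

lemma le_zero_of_forall_le_smul {Y : Type*} [AddCommGroup Y] [PartialOrder Y] [Module ℝ Y]
    [PosSMulMono ℝ Y] (harch : ∀ x y : Y, (∀ n : ℕ, n • x ≤ y) → x ≤ 0) {z w : Y}
    (hw : 0 ≤ w) (hz : ∀ ε : ℝ, 0 < ε → z ≤ ε • w) : z ≤ 0 := by
  refine harch z w fun n => ?_
  rcases n.eq_zero_or_pos with rfl | hn
  · simpa using hw
  · have hn' : (0 : ℝ) < n := Nat.cast_pos.mpr hn
    calc n • z = (n : ℝ) • z := (Nat.cast_smul_eq_nsmul ℝ n z).symm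
      _ ≤ (n : ℝ) • ((n : ℝ)⁻¹ • w) := smul_le_smul_of_nonneg_left (hz _ (inv_pos.mpr hn')) hn'.le
      _ = w := smul_inv_smul₀ hn'.ne' w

/-- `F` restricts to a lattice homomorphism `ℋ_m → Y`. -/
structure IsPHCLatticeHom {Y : Type*} [Lattice Y] [AddCommGroup Y] [Module ℝ Y]
    (F : ((Fin m → ℝ) → ℝ) → Y) : Prop where
  map_add : ∀ f g, IsPHC f → IsPHC g → F (f + g) = F f + F g
  map_smul : ∀ (c : ℝ) f, IsPHC f → F (c • f) = c • F f
  map_sup : ∀ f g, IsPHC f → IsPHC g → F (f ⊔ g) = F f ⊔ F g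

namespace IsPHCLatticeHom

variable {Y : Type*} [Lattice Y] [AddCommGroup Y] [Module ℝ Y]
  {F G : ((Fin m → ℝ) → ℝ) → Y} {f g : (Fin m → ℝ) → ℝ}

lemma map_zero (hF : IsPHCLatticeHom F) : F 0 = 0 := by
  simpa using hF.map_smul 0 0 isPHC_zero

lemma map_sub (hF : IsPHCLatticeHom F) (hf : IsPHC f) (hg : IsPHC g) :
    F (f - g) = F f - F g := by
  rw [sub_eq_add_neg, ← neg_one_smul ℝ g, hF.map_add _ _ hf (hg.smul _), hF.map_smul _ _ hg,
    neg_one_smul, ← sub_eq_add_neg]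

lemma monotoneOn (hF : IsPHCLatticeHom F) : MonotoneOn F {f | IsPHC f} := by
  intro f hf g hg hfg
  calc F f ≤ F f ⊔ F g := le_sup_left
    _ = F g := by rw [← hF.map_sup f g hf hg, sup_eq_right.mpr hfg]

lemma linearMap_comp {Z : Type*} [Lattice Z] [AddCommGroup Z] [Module ℝ Z]
    (hF : IsPHCLatticeHom F) (T : Y →ₗ[ℝ] Z) (hT : ∀ a b, T (a ⊔ b) = T a ⊔ T b) :
    IsPHCLatticeHom fun f => T (F f) where
  map_add f g hf hg := by rw [hF.map_add f g hf hg, T.map_add]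
  map_smul c f hf := by rw [hF.map_smul c f hf, T.map_smul]
  map_sup f g hf hg := by rw [hF.map_sup f g hf hg, hT]

lemma eq_of_inProjSublattice (hF : IsPHCLatticeHom F) (hG : IsPHCLatticeHom G)
    (hproj : ∀ k : Fin m, F (fun t => t k) = G fun t => t k) (hf : InProjSublattice f) :
    F f = G f := by
  induction hf with
  | zero => rw [hF.map_zero, hG.map_zero]
  | proj k => exact hproj k
  | add hf hg ihf ihg =>
    rw [hF.map_add _ _ hf.isPHC hg.isPHC, hG.map_add _ _ hf.isPHC hg.isPHC, ihf, ihg]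
  | smul c hf ih => rw [hF.map_smul c _ hf.isPHC, hG.map_smul c _ hf.isPHC, ih]
  | sup hf hg ihf ihg =>
    rw [hF.map_sup _ _ hf.isPHC hg.isPHC, hG.map_sup _ _ hf.isPHC hg.isPHC, ihf, ihg]

lemma sub_le_smul [AddLeftMono Y] (hF : IsPHCLatticeHom F) (hG : IsPHCLatticeHom G)
    (hproj : ∀ k : Fin m, F (fun t => t k) = G fun t => t k) {h : (Fin m → ℝ) → ℝ}
    (hh : IsPHC h) {ε : ℝ} (hε : 0 < ε) : F h - G h ≤ ε • (F sumAbs + G sumAbs) := by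
  obtain ⟨g, hg, hhg⟩ := exists_inProjSublattice_abs_sub_le hh hε
  obtain ⟨hhg, hgh⟩ := abs_le'.mp hhg
  rw [neg_sub] at hgh
  have hN : IsPHC (ε • sumAbs : (Fin m → ℝ) → ℝ) := isPHC_sumAbs.smul ε
  calc F h - G h = F (h - g) + G (g - h) := by
        rw [hF.map_sub hh hg.isPHC, hG.map_sub hg.isPHC hh,
          hF.eq_of_inProjSublattice hG hproj hg]
        abel
    _ ≤ F (ε • sumAbs) + G (ε • sumAbs) :=
        add_le_add (hF.monotoneOn (hh.sub hg.isPHC) hN hhg)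
          (hG.monotoneOn (hg.isPHC.sub hh) hN hgh)
    _ = ε • (F sumAbs + G sumAbs) := by
        rw [hF.map_smul _ _ isPHC_sumAbs, hG.map_smul _ _ isPHC_sumAbs, smul_add]

theorem eq_of_forall_proj [AddLeftMono Y] [PosSMulMono ℝ Y]
    (harch : ∀ x y : Y, (∀ n : ℕ, n • x ≤ y) → x ≤ 0)
    (hF : IsPHCLatticeHom F) (hG : IsPHCLatticeHom G)
    (hproj : ∀ k : Fin m, F (fun t => t k) = G fun t => t k) {h : (Fin m → ℝ) → ℝ}
    (hh : IsPHC h) : F h = G h := by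
  have hsumAbs : (0 : (Fin m → ℝ) → ℝ) ≤ sumAbs := sumAbs_nonneg
  have hw : 0 ≤ F sumAbs + G sumAbs := add_nonneg
    (hF.map_zero ▸ hF.monotoneOn isPHC_zero isPHC_sumAbs hsumAbs)
    (hG.map_zero ▸ hG.monotoneOn isPHC_zero isPHC_sumAbs hsumAbs)
  have hFG : F h - G h ≤ 0 := le_zero_of_forall_le_smul harch hw fun ε hε =>
    hF.sub_le_smul hG hproj hh hε
  have hGF : G h - F h ≤ 0 := le_zero_of_forall_le_smul harch (add_comm (F _) _ ▸ hw)
    fun ε hε => add_comm (G _) _ ▸ hG.sub_le_smul hF (fun k => (hproj k).symm) hh hε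
  exact le_antisymm (sub_nonpos.mp hFG) (sub_nonpos.mp hGF)

end IsPHCLatticeHom

end FunctionCalculus

theorem lattice_hom_commutes_with_function_calculus_general
    {X Y : Type*}
    [Lattice X] [AddCommGroup X] [Module ℝ X]
    [Lattice Y] [AddCommGroup Y] [Module ℝ Y]
    [CovariantClass Y Y (· + ·) (· ≤ ·)] [PosSMulMono ℝ Y]
    (harchY : ∀ x y : Y, (∀ n : ℕ, n • x ≤ y) → x ≤ 0)
    (T : X →ₗ[ℝ] Y) (hT : ∀ a b : X, T (a ⊔ b) = T a ⊔ T b)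
    -- the positively homogeneous continuous function calculus on `X`
    (Φ : ∀ m : ℕ, (Fin m → X) → ((Fin m → ℝ) → ℝ) → X)
    (hΦadd : ∀ (m) (x : Fin m → X) (h g), IsPHC h → IsPHC g →
      Φ m x (h + g) = Φ m x h + Φ m x g)
    (hΦsmul : ∀ (m) (x : Fin m → X) (c : ℝ) (h), IsPHC h → Φ m x (c • h) = c • Φ m x h)
    (hΦsup : ∀ (m) (x : Fin m → X) (h g), IsPHC h → IsPHC g →
      Φ m x (h ⊔ g) = Φ m x h ⊔ Φ m x g)
    (hΦproj : ∀ (m) (x : Fin m → X) (k : Fin m), Φ m x (fun t => t k) = x k)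
    -- the positively homogeneous continuous function calculus on `Y`
    (Ψ : ∀ m : ℕ, (Fin m → Y) → ((Fin m → ℝ) → ℝ) → Y)
    (hΨadd : ∀ (m) (y : Fin m → Y) (h g), IsPHC h → IsPHC g →
      Ψ m y (h + g) = Ψ m y h + Ψ m y g)
    (hΨsmul : ∀ (m) (y : Fin m → Y) (c : ℝ) (h), IsPHC h → Ψ m y (c • h) = c • Ψ m y h)
    (hΨsup : ∀ (m) (y : Fin m → Y) (h g), IsPHC h → IsPHC g →
      Ψ m y (h ⊔ g) = Ψ m y h ⊔ Ψ m y g)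
    (hΨproj : ∀ (m) (y : Fin m → Y) (k : Fin m), Ψ m y (fun t => t k) = y k) :
    ∀ (m : ℕ) (h : (Fin m → ℝ) → ℝ) (x : Fin m → X), IsPHC h →
      T (Φ m x h) = Ψ m (fun k => T (x k)) h := by
  intro m h x hh
  have hΦx : IsPHCLatticeHom (Φ m x) := ⟨hΦadd m x, hΦsmul m x, hΦsup m x⟩
  have hΨTx : IsPHCLatticeHom (Ψ m fun k => T (x k)) := ⟨hΨadd m _, hΨsmul m _, hΨsup m _⟩
  exact (hΦx.linearMap_comp T hT).eq_of_forall_proj harchY hΨTx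
    (fun k => by simp only [hΦproj, hΨproj]) hh

/-- Let `T : X → Y` be a lattice homomorphism between Archimedean vector
lattices each admitting a positively homogeneous continuous function calculus (`Φ` on `X`,
`Ψ` on `Y`). Then `T (h(x_1,…,x_m)) = h(T x_1, …, T x_m)` for every `m`, `h ∈ ℋ_m` and
`x_1, …, x_m ∈ X`. -/
theorem lattice_hom_commutes_with_function_calculus
    {X Y : Type*}
    [Lattice X] [AddCommGroup X] [Module ℝ X]
    [CovariantClass X X (· + ·) (· ≤ ·)] [PosSMulMono ℝ X]
    [Lattice Y] [AddCommGroup Y] [Module ℝ Y]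
    [CovariantClass Y Y (· + ·) (· ≤ ·)] [PosSMulMono ℝ Y]
    (harchX : ∀ x y : X, (∀ n : ℕ, n • x ≤ y) → x ≤ 0)
    (harchY : ∀ x y : Y, (∀ n : ℕ, n • x ≤ y) → x ≤ 0)
    (T : X →ₗ[ℝ] Y) (hT : ∀ a b : X, T (a ⊔ b) = T a ⊔ T b)
    -- the positively homogeneous continuous function calculus on `X`
    (Φ : ∀ m : ℕ, (Fin m → X) → ((Fin m → ℝ) → ℝ) → X)
    (hΦadd : ∀ (m) (x : Fin m → X) (h g), IsPHC h → IsPHC g →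
      Φ m x (h + g) = Φ m x h + Φ m x g)
    (hΦsmul : ∀ (m) (x : Fin m → X) (c : ℝ) (h), IsPHC h → Φ m x (c • h) = c • Φ m x h)
    (hΦsup : ∀ (m) (x : Fin m → X) (h g), IsPHC h → IsPHC g →
      Φ m x (h ⊔ g) = Φ m x h ⊔ Φ m x g)
    (hΦproj : ∀ (m) (x : Fin m → X) (k : Fin m), Φ m x (fun t => t k) = x k)
    -- the positively homogeneous continuous function calculus on `Y`
    (Ψ : ∀ m : ℕ, (Fin m → Y) → ((Fin m → ℝ) → ℝ) → Y)
    (hΨadd : ∀ (m) (y : Fin m → Y) (h g), IsPHC h → IsPHC g →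
      Ψ m y (h + g) = Ψ m y h + Ψ m y g)
    (hΨsmul : ∀ (m) (y : Fin m → Y) (c : ℝ) (h), IsPHC h → Ψ m y (c • h) = c • Ψ m y h)
    (hΨsup : ∀ (m) (y : Fin m → Y) (h g), IsPHC h → IsPHC g →
      Ψ m y (h ⊔ g) = Ψ m y h ⊔ Ψ m y g)
    (hΨproj : ∀ (m) (y : Fin m → Y) (k : Fin m), Ψ m y (fun t => t k) = y k) :
    ∀ (m : ℕ) (h : (Fin m → ℝ) → ℝ) (x : Fin m → X), IsPHC h →
      T (Φ m x h) = Ψ m (fun k => T (x k)) h :=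
  lattice_hom_commutes_with_function_calculus_general harchY T hT Φ hΦadd hΦsmul hΦsup hΦproj Ψ
    hΨadd hΨsmul hΨsup hΨproj
end

section
/- Let E be a real Banach space, let K be a compact Hausdorff topological space, and let T : E → C(K) be a bounded linear operator with ‖T‖ = 1. Then there exists a unique lattice homomorphism T̂ : C(B_{E*}) → C(K) such that T̂ ∘ φ_E = T and T̂(𝟙) = 𝟙. Moreover, ‖T̂‖ = ‖T‖ = 1 and T̂ is an algebra homomorphism. -/
open Metric

/-- The closed unit ball of the dual of `E`, equipped with the relative weak* topology. -/
def dualBall (E : Type*) [NormedAddCommGroup E] [NormedSpace ℝ E] : Set (WeakDual ℝ E) :=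
  { ψ : WeakDual ℝ E | ‖WeakDual.toStrongDual ψ‖ ≤ 1 }

/-- Banach–Alaoglu: the dual ball is weak* compact. -/
instance dualBall.instCompactSpace (E : Type*) [NormedAddCommGroup E] [NormedSpace ℝ E] :
    CompactSpace (dualBall E) :=
  isCompact_iff_compactSpace.mp (by
    have h := WeakDual.isCompact_closedBall (𝕜 := ℝ) (E := E) 0 1
    convert h using 1
    ext ψ
    simp [dualBall, mem_closedBall_zero_iff])

/-- The canonical isometry `φ_E : E → C(B_{E*})`, `x ↦ δ_x`, where
`δ_x(x*) = x*(x)`. -/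
noncomputable def deltaMap (E : Type*) [NormedAddCommGroup E] [NormedSpace ℝ E] (x : E) :
    C(dualBall E, ℝ) :=
  ⟨fun ψ => (ψ : WeakDual ℝ E) x, (WeakDual.eval_continuous x).comp continuous_subtype_val⟩

/-!
`T̂` is composition with the weak* continuous map `τ : K → B_{E*}`, `τ k = T* δ_k`, which makes
it a unital lattice and algebra homomorphism of norm one. Conversely a unital lattice homomorphism
is positive, hence contractive, so two of them agreeing on the constants and on the point
separating family `φ_E(E)` agree on a closed sublattice which separates points strongly; by the
lattice Stone–Weierstrass theorem this sublattice is all of `C(B_{E*})`.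
-/

theorem Submodule.separatesPointsStrongly_of_one_mem {X 𝕜 : Type*} [TopologicalSpace X] [Field 𝕜]
    [TopologicalSpace 𝕜] [IsTopologicalRing 𝕜] (M : Submodule 𝕜 C(X, 𝕜)) (one_mem : 1 ∈ M)
    (sep : ∀ x y, x ≠ y → ∃ f ∈ M, f x ≠ f y) : (M : Set C(X, 𝕜)).SeparatesPointsStrongly := by
  intro v x y
  by_cases hxy : x = y
  · subst hxy
    exact ⟨v x • 1, M.smul_mem _ one_mem, by simp, by simp⟩
  obtain ⟨f, hfM, hf⟩ := sep x y hxy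
  have hf' : f x - f y ≠ 0 := sub_ne_zero.mpr hf
  refine ⟨((v x - v y) / (f x - f y)) • (f - f y • 1) + v y • 1,
    M.add_mem (M.smul_mem _ (M.sub_mem hfM (M.smul_mem _ one_mem))) (M.smul_mem _ one_mem),
    ?_, by simp⟩
  simp [div_mul_cancel₀ _ hf']

namespace ContinuousMap

variable {X Y : Type*} [TopologicalSpace X] [TopologicalSpace Y] [CompactSpace X] [CompactSpace Y]

theorem norm_compCLM_eq_one [Nonempty X] (g : C(X, Y)) : ‖compCLM ℝ ℝ g‖ = 1 := by
  refine le_antisymm (ContinuousLinearMap.opNorm_le_bound _ zero_le_one fun f => ?_) ?_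
  · rw [one_mul, ContinuousMap.norm_le _ (norm_nonneg f)]
    exact fun x => f.norm_coe_le_norm (g x)
  · have : Nonempty Y := ⟨g (Classical.arbitrary X)⟩
    simpa [one_comp] using (compCLM ℝ ℝ g).le_opNorm 1

theorem norm_evalCLM_le (x : X) : ‖(evalCLM ℝ x : C(X, ℝ) →L[ℝ] ℝ)‖ ≤ 1 :=
  ContinuousLinearMap.opNorm_le_bound _ zero_le_one fun f => by simpa using f.norm_coe_le_norm x

theorem norm_apply_le_of_monotone {S : C(X, ℝ) →ₗ[ℝ] C(Y, ℝ)} (hS : Monotone S)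
    (h_one : S 1 = 1) (f : C(X, ℝ)) : ‖S f‖ ≤ ‖f‖ := by
  have h_abs (x : X) : |f x| ≤ ‖f‖ := f.norm_coe_le_norm x
  have h_le : f ≤ ‖f‖ • 1 := fun x => by simpa using (abs_le.mp (h_abs x)).2
  have h_ge : -(‖f‖ • 1) ≤ f := fun x => by simpa using (abs_le.mp (h_abs x)).1
  refine (ContinuousMap.norm_le _ (norm_nonneg f)).mpr fun y => abs_le.mpr ⟨?_, ?_⟩
  · simpa [h_one] using hS h_ge y
  · simpa [h_one] using hS h_le y

theorem continuous_of_map_sup {S : C(X, ℝ) →ₗ[ℝ] C(Y, ℝ)}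
    (hS : ∀ f g, S (f ⊔ g) = S f ⊔ S g) (h_one : S 1 = 1) : Continuous S :=
  AddMonoidHomClass.continuous_of_bound S 1 fun f => by
    simpa using norm_apply_le_of_monotone (Monotone.of_map_sup hS) h_one f

theorem linearMap_ext_of_map_sup {F : Type*} [AddCommMonoid F] [Module ℝ F] [Max F]
    [TopologicalSpace F] [T2Space F] {S S' : C(X, ℝ) →ₗ[ℝ] F} (hS : Continuous S)
    (hS' : Continuous S') (hS_sup : ∀ f g, S (f ⊔ g) = S f ⊔ S g)
    (hS'_sup : ∀ f g, S' (f ⊔ g) = S' f ⊔ S' g) (h_one : S 1 = S' 1) {A : Set C(X, ℝ)}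
    (hA : ∀ x y, x ≠ y → ∃ f ∈ A, f x ≠ f y) (h_eqOn : Set.EqOn S S' A) : S = S' := by
  set L := LinearMap.eqLocus S S'
  have sup_mem : ∀ f ∈ L, ∀ g ∈ L, f ⊔ g ∈ L := fun f hf g hg => by
    rw [LinearMap.mem_eqLocus] at hf hg ⊢
    rw [hS_sup, hS'_sup, hf, hg]
  have inf_mem : ∀ f ∈ L, ∀ g ∈ L, f ⊓ g ∈ L := fun f hf g hg => by
    rw [← add_sub_cancel_right (f ⊓ g) (f ⊔ g), inf_add_sup]
    exact L.sub_mem (L.add_mem hf hg) (sup_mem f hf g hg)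
  have sep : (L : Set C(X, ℝ)).SeparatesPointsStrongly :=
    Submodule.separatesPointsStrongly_of_one_mem L h_one fun x y hxy => by
      obtain ⟨f, hfA, hf⟩ := hA x y hxy
      exact ⟨f, h_eqOn hfA, hf⟩
  have h_closed : IsClosed (L : Set C(X, ℝ)) := isClosed_eq hS hS'
  have h_dense := sublattice_closure_eq_top (L : Set C(X, ℝ)) ⟨1, h_one⟩ inf_mem sup_mem sep
  rw [h_closed.closure_eq] at h_dense
  exact LinearMap.ext fun f => h_dense.ge trivial

end ContinuousMap

namespace ContinuousLinearMap

variable {E K : Type*} [NormedAddCommGroup E] [NormedSpace ℝ E] [TopologicalSpace K]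
  [CompactSpace K]

theorem norm_evalCLM_comp_le {T : E →L[ℝ] C(K, ℝ)} (hT : ‖T‖ ≤ 1) (k : K) :
    ‖(ContinuousMap.evalCLM ℝ k : C(K, ℝ) →L[ℝ] ℝ).comp T‖ ≤ 1 :=
  (opNorm_comp_le _ _).trans (mul_le_one₀ (ContinuousMap.norm_evalCLM_le k) (norm_nonneg T) hT)

noncomputable def toDualBallMap (T : E →L[ℝ] C(K, ℝ)) (hT : ‖T‖ ≤ 1) : C(K, dualBall E) where
  toFun k := ⟨StrongDual.toWeakDual ((ContinuousMap.evalCLM ℝ k : C(K, ℝ) →L[ℝ] ℝ).comp T),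
    norm_evalCLM_comp_le hT k⟩
  continuous_toFun :=
    (WeakDual.continuous_of_continuous_eval fun x => (T x).continuous).subtype_mk _

end ContinuousLinearMap

theorem deltaMap_separatesPoints (E : Type*) [NormedAddCommGroup E] [NormedSpace ℝ E]
    (ψ φ : dualBall E) (hne : ψ ≠ φ) : ∃ f ∈ Set.range (deltaMap E), f ψ ≠ f φ := by
  obtain ⟨x, hx⟩ := DFunLike.ne_iff.mp (Subtype.coe_injective.ne hne)
  exact ⟨deltaMap E x, ⟨x, rfl⟩, hx⟩

theorem free_unital_AM_space_universal_property_general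
    (E K : Type*) [NormedAddCommGroup E] [NormedSpace ℝ E]
    [TopologicalSpace K] [CompactSpace K]
    (T : E →L[ℝ] C(K, ℝ)) (hT : ‖T‖ = 1) :
    ∃ That : C(dualBall E, ℝ) →L[ℝ] C(K, ℝ),
      (∀ f g : C(dualBall E, ℝ), That (f ⊔ g) = That f ⊔ That g) ∧
      (∀ x : E, That (deltaMap E x) = T x) ∧
      That 1 = 1 ∧
      ‖That‖ = 1 ∧
      (∀ f g : C(dualBall E, ℝ), That (f * g) = That f * That g) ∧
      (∀ S : C(dualBall E, ℝ) →ₗ[ℝ] C(K, ℝ),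
        (∀ f g : C(dualBall E, ℝ), S (f ⊔ g) = S f ⊔ S g) →
        (∀ x : E, S (deltaMap E x) = T x) → S 1 = 1 →
        ∀ f, S f = That f) := by
  have : Nonempty K := by
    by_contra hK
    rw [not_nonempty_iff] at hK
    have : ‖T‖ ≤ 0 := T.opNorm_le_bound le_rfl fun x => by simp [Subsingleton.elim (T x) 0]
    linarith
  set That := ContinuousMap.compCLM ℝ ℝ (T.toDualBallMap hT.le)
  have That_sup : ∀ f g, That (f ⊔ g) = That f ⊔ That g := fun _ _ => rfl
  refine ⟨That, That_sup, fun _ => rfl, ContinuousMap.one_comp _,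
    ContinuousMap.norm_compCLM_eq_one _, fun f g => ContinuousMap.mul_comp f g _, ?_⟩
  intro S hS_sup hS_delta hS_one f
  refine LinearMap.congr_fun (ContinuousMap.linearMap_ext_of_map_sup
    (ContinuousMap.continuous_of_map_sup hS_sup hS_one) That.continuous hS_sup That_sup
    (hS_one.trans (ContinuousMap.one_comp _).symm) (deltaMap_separatesPoints E)
    (Set.forall_mem_range.mpr hS_delta)) f

/-- Let `E` be a real Banach space, `K` a compact Hausdorff space and
`T : E → C(K)` a bounded linear operator with `‖T‖ = 1`. Then there is a unique lattice
homomorphism `T̂ : C(B_{E*}) → C(K)` with `T̂ ∘ φ_E = T` and `T̂ 𝟙 = 𝟙`; moreover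
`‖T̂‖ = ‖T‖ = 1` and `T̂` is an algebra homomorphism. -/
theorem free_unital_AM_space_universal_property
    (E K : Type*) [NormedAddCommGroup E] [NormedSpace ℝ E] [CompleteSpace E]
    [TopologicalSpace K] [CompactSpace K] [T2Space K]
    (T : E →L[ℝ] C(K, ℝ)) (hT : ‖T‖ = 1) :
    ∃ That : C(dualBall E, ℝ) →L[ℝ] C(K, ℝ),
      (∀ f g : C(dualBall E, ℝ), That (f ⊔ g) = That f ⊔ That g) ∧
      (∀ x : E, That (deltaMap E x) = T x) ∧
      That 1 = 1 ∧
      ‖That‖ = 1 ∧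
      (∀ f g : C(dualBall E, ℝ), That (f * g) = That f * That g) ∧
      (∀ S : C(dualBall E, ℝ) →ₗ[ℝ] C(K, ℝ),
        (∀ f g : C(dualBall E, ℝ), S (f ⊔ g) = S f ⊔ S g) →
        (∀ x : E, S (deltaMap E x) = T x) → S 1 = 1 →
        ∀ f, S f = That f) :=
  free_unital_AM_space_universal_property_general E K T hT
end
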